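/- Let (t_n)_{n≥0} be the Thue–Morse sequence and (b_n)_{n≥1} the paperfolding sequence. Then ζ(3) − π³ = ∑_{n≥1} [ (1/8)·(9·t_{n−1} + 7·t_n) + 28·(2b_n − 1) ] / n³. -/

import Mathlib

/-- Even-index Euler numbers: `E2 k = E_{2k}`, where `1/cosh t = ∑ E_n t^n/n!`
(equivalently, `E_0 = 1`, odd-index Euler numbers vanish, and
`∑_{j≤n} C(2n,2j) E_{2j} = 0` for `n ≥ 1`). -/
def E2 : ℕ → ℤ
  | 0 => 1
  | n + 1 => -∑ k ∈ (Finset.range (n+1)).attach,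
      ((2*(n+1)).choose (2*k.1) : ℤ) * E2 k.1
decreasing_by exact Finset.mem_range.mp k.2

/-- Thue–Morse sequence: `tm 0 = 0`, `tm (2n) = tm n`, `tm (2n+1) = 1 - tm n`. -/
def tm : ℕ → ℕ
  | 0 => 0
  | n + 1 => if (n+1) % 2 = 0 then tm ((n+1)/2) else 1 - tm ((n+1)/2)
decreasing_by all_goals exact Nat.div_lt_self (Nat.succ_pos n) one_lt_two

/-- Paperfolding (dragon-curve) sequence: `pf (2n) = pf n`, `pf (4n+1) = 0`,
`pf (4n+3) = 1` (with `pf 0 = 0`). -/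
def pf : ℕ → ℕ
  | 0 => 0
  | n + 1 => if (n+1) % 2 = 0 then pf ((n+1)/2) else if (n+1) % 4 = 1 then 0 else 1
decreasing_by exact Nat.div_lt_self (Nat.succ_pos n) one_lt_two

lemma tm_two_mul (n : ℕ) : tm (2*n) = tm n := by
  cases n with
  | zero => rfl
  | succ m =>
    show tm (2*m+1+1) = tm (m+1)
    rw [tm]
    have h1 : (2*m+1+1) % 2 = 0 := by omega
    have h2 : (2*m+1+1) / 2 = m+1 := by omega
    simp [h1, h2]

lemma tm_odd (n : ℕ) : tm (2*n+1) = 1 - tm n := by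
  rw [tm]
  have h1 : (2*n+1) % 2 = 1 := by omega
  have h2 : (2*n+1) / 2 = n := by omega
  simp [h1, h2]

lemma tm_le_one (n : ℕ) : tm n ≤ 1 := by
  induction n using Nat.strong_induction_on with
  | _ n ih =>
    match n with
    | 0 => rw [tm]; exact Nat.zero_le 1
    | n+1 =>
      rw [tm]
      split
      · exact ih _ (Nat.div_lt_self (Nat.succ_pos n) one_lt_two)
      · omega

lemma pf_two_mul (n : ℕ) : pf (2*n) = pf n := by
  cases n with
  | zero => rfl
  | succ m =>
    show pf (2*m+1+1) = pf (m+1)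
    rw [pf]
    have h1 : (2*m+1+1) % 2 = 0 := by omega
    have h2 : (2*m+1+1) / 2 = m+1 := by omega
    simp [h1, h2]

lemma pf_odd (n : ℕ) : pf (2*n+1) = if n % 2 = 0 then 0 else 1 := by
  rw [pf]
  have h1 : (2*n+1) % 2 = 1 := by omega
  have h2 : (2*n+1) % 4 = 1 ↔ n % 2 = 0 := by omega
  rcases Nat.even_or_odd n with h | h
  · have : n % 2 = 0 := Nat.even_iff.mp h
    simp [h1, h2.mpr this, this]
  · have : n % 2 = 1 := Nat.odd_iff.mp h
    simp [h1, this, h2]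

lemma pf_le_one (n : ℕ) : pf n ≤ 1 := by
  induction n using Nat.strong_induction_on with
  | _ n ih =>
    match n with
    | 0 => rw [pf]; exact Nat.zero_le 1
    | n+1 =>
      rw [pf]
      split
      · exact ih _ (Nat.div_lt_self (Nat.succ_pos n) one_lt_two)
      · split <;> omega

open Real

noncomputable def zf (n : ℕ) : ℝ := 1 / (n:ℝ)^3
noncomputable def gf (n : ℕ) : ℝ := (tm n : ℝ) / (n:ℝ)^3
noncomputable def hf (n : ℕ) : ℝ := (tm (n-1) : ℝ) / (n:ℝ)^3
noncomputable def qf (n : ℕ) : ℝ := (2*(pf n : ℝ) - 1) / (n:ℝ)^3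
noncomputable def cf (n : ℕ) : ℝ := (tm n : ℝ) / ((2*n+1:ℕ):ℝ)^3

lemma div8 (a x : ℝ) : a / (8*x) = 1/8 * (a/x) := by
  rw [div_mul_div_comm, one_mul]

lemma Sz : Summable zf := Real.summable_one_div_nat_pow.mpr (by norm_num)

lemma Sg : Summable gf := by
  refine Summable.of_nonneg_of_le (fun n => by unfold gf; positivity) (fun n => ?_) Sz
  unfold gf zf
  rw [div_eq_mul_inv, div_eq_mul_inv]
  refine mul_le_mul_of_nonneg_right ?_ (by positivity)
  exact_mod_cast tm_le_one n

lemma Sh : Summable hf := by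
  refine Summable.of_nonneg_of_le (fun n => by unfold hf; positivity) (fun n => ?_) Sz
  unfold hf zf
  rw [div_eq_mul_inv, div_eq_mul_inv]
  refine mul_le_mul_of_nonneg_right ?_ (by positivity)
  exact_mod_cast tm_le_one (n-1)

lemma Sq : Summable qf := by
  refine Summable.of_norm_bounded Sz (fun n => ?_)
  unfold qf zf
  simp only [norm_div, norm_pow, Real.norm_natCast]
  rw [div_eq_mul_inv, div_eq_mul_inv]
  refine mul_le_mul_of_nonneg_right ?_ (inv_nonneg.mpr (by positivity))
  rcases Nat.le_one_iff_eq_zero_or_eq_one.mp (pf_le_one n) with h | h <;> rw [h] <;> norm_num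

lemma inj2 : Function.Injective (fun k : ℕ => 2*k) := fun a b h => by dsimp at h; omega
lemma inj21 : Function.Injective (fun k : ℕ => 2*k+1) := fun a b h => by dsimp at h; omega

lemma Sz_e : Summable (fun k => zf (2*k)) := Sz.comp_injective inj2
lemma Sz_o : Summable (fun k => zf (2*k+1)) := Sz.comp_injective inj21
lemma Sg_e : Summable (fun k => gf (2*k)) := Sg.comp_injective inj2
lemma Sg_o : Summable (fun k => gf (2*k+1)) := Sg.comp_injective inj21
lemma Sh_e : Summable (fun k => hf (2*k)) := Sh.comp_injective inj2
lemma Sh_o : Summable (fun k => hf (2*k+1)) := Sh.comp_injective inj21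
lemma Sq_e : Summable (fun k => qf (2*k)) := Sq.comp_injective inj2
lemma Sq_o : Summable (fun k => qf (2*k+1)) := Sq.comp_injective inj21

lemma gf_even (k : ℕ) : gf (2*k) = 1/8 * gf k := by
  unfold gf
  rw [tm_two_mul]
  push_cast
  rw [show (2*(k:ℝ))^3 = 8*(k:ℝ)^3 from by ring, div8]

lemma zf_even (k : ℕ) : zf (2*k) = 1/8 * zf k := by
  unfold zf
  push_cast
  rw [show (2*(k:ℝ))^3 = 8*(k:ℝ)^3 from by ring, div8]

lemma qf_even (k : ℕ) : qf (2*k) = 1/8 * qf k := by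
  unfold qf
  rw [pf_two_mul]
  push_cast
  rw [show (2*(k:ℝ))^3 = 8*(k:ℝ)^3 from by ring, div8]

lemma gf_odd (k : ℕ) : gf (2*k+1) = zf (2*k+1) - cf k := by
  unfold gf zf cf
  rw [tm_odd, Nat.cast_sub (tm_le_one k), sub_div]
  norm_num

lemma hf_even (k : ℕ) : hf (2*k) = 1/8 * (zf k - hf k) := by
  cases k with
  | zero =>
    show hf 0 = _
    unfold hf zf
    norm_num
  | succ m =>
    unfold hf zf
    rw [show 2*(m+1) - 1 = 2*m+1 from by omega, tm_odd,
      Nat.cast_sub (tm_le_one m), show m+1-1 = m from by omega]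
    push_cast
    rw [show (2*((m:ℝ)+1))^3 = 8*((m:ℝ)+1)^3 from by ring, ← sub_div, div8]

lemma hf_odd (k : ℕ) : hf (2*k+1) = cf k := by
  unfold hf cf
  rw [show 2*k+1-1 = 2*k from by omega, tm_two_mul]

lemma Sc : Summable cf := by
  have : cf = fun k => zf (2*k+1) - gf (2*k+1) := by
    funext k
    rw [gf_odd]; ring
  rw [this]
  exact Sz_o.sub Sg_o

lemma hcos (k : ℕ) : Real.cos (k*π) = (-1)^k := by
  simpa using Real.cos_nat_mul_pi_sub 0 k

lemma qf_odd (k : ℕ) : qf (2*k+1) = -((-1)^k * zf (2*k+1)) := by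
  unfold qf zf
  rw [pf_odd]
  rcases Nat.even_or_odd k with h | h
  · rw [if_pos (Nat.even_iff.mp h), h.neg_one_pow]
    push_cast
    ring
  · have hk := Nat.odd_iff.mp h
    rw [if_neg (by omega), h.neg_one_pow]
    push_cast
    ring

lemma hbeta : HasSum (fun k : ℕ => (-1:ℝ)^k * zf (2*k+1)) (π^3/32) := by
  have h0 := hasSum_L_function_mod_four_eval_three
  have h1 := (inj21.hasSum_iff (f := fun n : ℕ => (1:ℝ) / (n:ℝ)^3 * Real.sin (π * n / 2))
    ?_).mpr h0
  · refine h1.congr_fun fun k => ?_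
    show ((-1:ℝ))^k * zf (2*k+1) = (1:ℝ) / ((2*k+1:ℕ):ℝ)^3 * Real.sin (π * ((2*k+1:ℕ):ℝ) / 2)
    unfold zf
    rw [show π * ((2*k+1:ℕ):ℝ) / 2 = k*π + π/2 from by push_cast; ring,
      Real.sin_add, Real.sin_nat_mul_pi, Real.cos_pi_div_two, Real.sin_pi_div_two, hcos]
    ring
  · rintro n hn
    obtain ⟨m, hm | hm⟩ := Nat.even_or_odd' n
    · subst hm
      show (1:ℝ) / ((2*m:ℕ):ℝ)^3 * Real.sin (π * ((2*m:ℕ):ℝ) / 2) = 0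
      rw [show π * ((2*m:ℕ):ℝ) / 2 = m*π from by push_cast; ring, Real.sin_nat_mul_pi, mul_zero]
    · exact absurd ⟨m, hm.symm⟩ hn

lemma e1 : ∑' n, zf n = 1/8 * (∑' n, zf n) + ∑' k, zf (2*k+1) := by
  conv_lhs => rw [← tsum_even_add_odd Sz_e Sz_o]
  congr 1
  rw [tsum_congr zf_even, tsum_mul_left]

lemma e2 : ∑' n, gf n = 1/8 * (∑' n, gf n) + ((∑' k, zf (2*k+1)) - ∑' k, cf k) := by
  conv_lhs => rw [← tsum_even_add_odd Sg_e Sg_o]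
  congr 1
  · rw [tsum_congr gf_even, tsum_mul_left]
  · rw [tsum_congr gf_odd, Summable.tsum_sub Sz_o Sc]

lemma e3 : ∑' n, hf n = 1/8 * ((∑' n, zf n) - ∑' n, hf n) + ∑' k, cf k := by
  conv_lhs => rw [← tsum_even_add_odd Sh_e Sh_o]
  congr 1
  · rw [tsum_congr hf_even, tsum_mul_left, Summable.tsum_sub Sz Sh]
  · exact tsum_congr hf_odd

lemma e4 : ∑' n, qf n = 1/8 * (∑' n, qf n) - π^3/32 := by
  conv_lhs => rw [← tsum_even_add_odd Sq_e Sq_o]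
  rw [tsum_congr qf_even, tsum_mul_left, tsum_congr qf_odd, tsum_neg, hbeta.tsum_eq]
  ring

theorem zeta_three_minus_pi_cubed :
    (∑' n : ℕ, (1:ℝ) / ((n:ℝ) + 1) ^ 3) - Real.pi ^ 3 =
      ∑' n : ℕ,
        ((1/8) * (9 * (tm n : ℝ) + 7 * (tm (n+1) : ℝ)) + 28 * (2 * (pf (n+1) : ℝ) - 1))
          / ((n:ℝ) + 1) ^ 3 := by
  -- identify the statement sums
  have hz0 : zf 0 = 0 := by unfold zf; norm_num
  have hZ' : (∑' n : ℕ, (1:ℝ) / ((n:ℝ) + 1) ^ 3) = ∑' n, zf n := by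
    rw [Summable.tsum_eq_zero_add Sz, hz0, zero_add]
    symm
    exact tsum_congr fun n => by unfold zf; push_cast; ring_nf
  have Sh1 : Summable (fun n => hf (n+1)) := (summable_nat_add_iff 1).mpr Sh
  have Sg1 : Summable (fun n => gf (n+1)) := (summable_nat_add_iff 1).mpr Sg
  have Sq1 : Summable (fun n => qf (n+1)) := (summable_nat_add_iff 1).mpr Sq
  have hRHS : (∑' n : ℕ,
        ((1/8) * (9 * (tm n : ℝ) + 7 * (tm (n+1) : ℝ)) + 28 * (2 * (pf (n+1) : ℝ) - 1))
          / ((n:ℝ) + 1) ^ 3) = 9/8 * (∑' n, hf n) + 7/8 * (∑' n, gf n) + 28 * (∑' n, qf n) := by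
    have hterm : ∀ n : ℕ,
        ((1/8) * (9 * (tm n : ℝ) + 7 * (tm (n+1) : ℝ)) + 28 * (2 * (pf (n+1) : ℝ) - 1))
          / ((n:ℝ) + 1) ^ 3
        = 9/8 * hf (n+1) + 7/8 * gf (n+1) + 28 * qf (n+1) := by
      intro n
      unfold hf gf qf
      rw [show n+1-1 = n from rfl]
      push_cast
      simp only [div_eq_mul_inv]
      ring
    rw [tsum_congr hterm, Summable.tsum_add ((Sh1.mul_left _).add (Sg1.mul_left _)) (Sq1.mul_left _),
      Summable.tsum_add (Sh1.mul_left _) (Sg1.mul_left _), tsum_mul_left, tsum_mul_left, tsum_mul_left]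
    have h1 : ∑' n, hf n = hf 0 + ∑' n, hf (n+1) := Summable.tsum_eq_zero_add Sh
    have h2 : ∑' n, gf n = gf 0 + ∑' n, gf (n+1) := Summable.tsum_eq_zero_add Sg
    have h3 : ∑' n, qf n = qf 0 + ∑' n, qf (n+1) := Summable.tsum_eq_zero_add Sq
    have hh0 : hf 0 = 0 := by unfold hf; norm_num
    have hg0 : gf 0 = 0 := by unfold gf; norm_num
    have hq0 : qf 0 = 0 := by unfold qf; norm_num
    rw [hh0, zero_add] at h1
    rw [hg0, zero_add] at h2
    rw [hq0, zero_add] at h3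
    rw [← h1, ← h2, ← h3]
  rw [hZ', hRHS]
  linarith [e1, e2, e3, e4]
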